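/- Let (T, J) be an ℕ-pair with both T and J infinite. Then there exists a sequence of interval pairs (C_k, D_k) of sizes N_k (so C_k ⊕ D_k = {0,…,N_k−1}) with C_k ⊆ C_{k+1}, D_k ⊆ D_{k+1}, ∪_k C_k = T, ∪_k D_k = J, and subsets A_k, B_k ⊆ ℕ such that T = C_k ⊕ N_k A_k and J = D_k ⊕ N_k B_k for every k. -/

import Mathlib

open Pointwise

/-- Unique decompositions: every sum `a + b` with `a ∈ A`, `b ∈ B` determines `a` and `b`. -/
def UniqueSumsOn {α : Type*} [Add α] (A B : Set α) : Prop :=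
  ∀ a ∈ A, ∀ b ∈ B, ∀ a' ∈ A, ∀ b' ∈ B, a + b = a' + b' → a = a' ∧ b = b'

/-- `C = A ⊕ B`: `C` is the direct sum of `A` and `B`. -/
def IsDirectSum {α : Type*} [Add α] (A B C : Set α) : Prop :=
  C = A + B ∧ UniqueSumsOn A B

/-!
Suppose `1 ∈ T` and let `M` be the least positive element of `J`, so that `[0, M) ⊆ T`. A strong
induction on `q` shows that every block `[M q, M q + M)` lies either inside `T` or outside it, and
meets `J` at most in `M q`. Hence `T = [0, M) ⊕ M T'` and `J = M J'`, where `(T', J')` is again an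
ℕ-pair of infinite sets, and `M ≥ 2` because `1 ∉ J`; if instead `1 ∈ J`, the roles are swapped.
Iterating on `(T', J')` and composing the splittings gives interval pairs `(C_k, D_k)` of sizes
`N_k ≥ 2^k` with `T = C_k ⊕ N_k A_k` and `J = D_k ⊕ N_k B_k`. Since `C_k` contains every element of
`T` below `N_k`, the `C_k` exhaust `T`, and likewise the `D_k` exhaust `J`.
-/

namespace UniqueSumsOn

variable {α : Type*}

theorem mono [Add α] {A B A' B' : Set α} (h : UniqueSumsOn A B) (hA : A' ⊆ A) (hB : B' ⊆ B) :
    UniqueSumsOn A' B' :=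
  fun a ha b hb a' ha' b' hb' hab => h a (hA ha) b (hB hb) a' (hA ha') b' (hB hb') hab

theorem symm [AddCommMagma α] {A B : Set α} (h : UniqueSumsOn A B) : UniqueSumsOn B A :=
  fun b hb a ha b' hb' a' ha' hab =>
    (h a ha b hb a' ha' b' hb' (by rwa [add_comm a, add_comm a'])).symm

theorem preimage {β : Type*} [Add α] [Add β] {A B : Set β} {f : α → β}
    (h : UniqueSumsOn A B) (hf : Function.Injective f) (hadd : ∀ x y, f (x + y) = f x + f y) :
    UniqueSumsOn (f ⁻¹' A) (f ⁻¹' B) := fun a ha b hb a' ha' b' hb' hab =>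
  have hf' := h _ ha _ hb _ ha' _ hb' (by rw [← hadd, ← hadd, hab])
  ⟨hf hf'.1, hf hf'.2⟩

variable [AddZeroClass α] {A B : Set α} {a b : α}

theorem add_mem_left_iff (h : UniqueSumsOn A B) (h0 : 0 ∈ B) (ha : a ∈ A) (hb : b ∈ B) :
    a + b ∈ A ↔ b = 0 := by
  refine ⟨fun hab => (h _ hab 0 h0 a ha b hb (add_zero _)).2.symm, ?_⟩
  rintro rfl
  rwa [add_zero]

theorem add_mem_right_iff (h : UniqueSumsOn A B) (h0 : 0 ∈ A) (ha : a ∈ A) (hb : b ∈ B) :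
    a + b ∈ B ↔ a = 0 := by
  refine ⟨fun hab => (h 0 h0 _ hab a ha b hb (zero_add _)).1.symm, ?_⟩
  rintro rfl
  rwa [zero_add]

end UniqueSumsOn

theorem IsDirectSum.symm {α : Type*} [AddCommSemigroup α] {A B C : Set α}
    (h : IsDirectSum A B C) : IsDirectSum B A C :=
  ⟨h.1.trans (add_comm A B), h.2.symm⟩

theorem zero_mem_of_zero_mem_add {α : Type*} [AddCommMonoid α] [Subsingleton (AddUnits α)]
    {A B : Set α} (h : (0 : α) ∈ A + B) : 0 ∈ A ∧ 0 ∈ B := by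
  obtain ⟨a, ha, b, hb, hab⟩ := Set.mem_add.mp h
  obtain ⟨rfl, rfl⟩ := add_eq_zero.mp hab
  exact ⟨ha, hb⟩

namespace IsDirectSum

variable {T J : Set ℕ}

theorem exists_add_eq (h : IsDirectSum T J Set.univ) (n : ℕ) :
    ∃ t ∈ T, ∃ j ∈ J, t + j = n :=
  Set.mem_add.mp (h.1 ▸ Set.mem_univ n)

theorem zero_mem (h : IsDirectSum T J Set.univ) : 0 ∈ T ∧ 0 ∈ J :=
  zero_mem_of_zero_mem_add (h.1 ▸ Set.mem_univ 0)

theorem Iio_subset_left (h : IsDirectSum T J Set.univ) {M : ℕ}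
    (hmin : ∀ j ∈ J, j < M → j = 0) : Set.Iio M ⊆ T := by
  intro r hr
  obtain ⟨t, ht, j, hj, rfl⟩ := h.exists_add_eq r
  rwa [hmin j hj (by simp only [Set.mem_Iio] at hr; omega), add_zero]

end IsDirectSum

section Block

variable {T J : Set ℕ} {M q : ℕ}

def BlockSplits (T J : Set ℕ) (M q : ℕ) : Prop :=
  ∀ r < M, (M * q + r ∈ T ↔ M * q ∈ T) ∧ (M * q + r ∈ J → r = 0)

theorem BlockSplits.dvd_of_mem {j : ℕ} (hb : BlockSplits T J M (j / M)) (hM : 0 < M)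
    (hj : j ∈ J) : M ∣ j := by
  have h := (hb (j % M) (Nat.mod_lt _ hM)).2
  rw [Nat.div_add_mod] at h
  exact Nat.dvd_of_mod_eq_zero (h hj)

theorem dvd_of_mem_of_le_of_forall_lt (hM : 0 < M) (ih : ∀ q' < q, BlockSplits T J M q')
    {j : ℕ} (hj : j ∈ J) (hjq : j ≤ M * q) : M ∣ j := by
  rcases hjq.lt_or_eq with hlt | rfl
  · exact (ih (j / M) (Nat.div_lt_of_lt_mul hlt)).dvd_of_mem hM hj
  · exact dvd_mul_right M q

variable (h : IsDirectSum T J Set.univ) (hM : 0 < M) (hMJ : M ∈ J)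
  (hmin : ∀ j ∈ J, j < M → j = 0)
include h hM hMJ hmin

theorem add_mem_left_of_forall_lt (ih : ∀ q' < q, BlockSplits T J M q') (hq : M * q ∈ T)
    {r : ℕ} (hr : r < M) : M * q + r ∈ T := by
  obtain ⟨h0T, h0J⟩ := h.zero_mem
  obtain ⟨t, ht, j, hj, hsum⟩ := h.exists_add_eq (M * q + r)
  suffices hj0 : j = 0 by rwa [← hsum, hj0, add_zero]
  by_contra hj0
  have hMj : M ≤ j := by
    by_contra! hjM
    exact hj0 (hmin j hj hjM)
  rcases le_or_gt j (M * q) with hle | hgt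
  · obtain ⟨c, rfl⟩ := dvd_of_mem_of_le_of_forall_lt hM ih hj hle
    have hc : c ≤ q := Nat.le_of_mul_le_mul_left hle hM
    have hc0 : 0 < c := Nat.pos_of_ne_zero (right_ne_zero_of_mul hj0)
    have hsplit : M * q = M * (q - c) + M * c := by rw [Nat.mul_sub]; omega
    have ht' : t = M * (q - c) + r := by rw [Nat.mul_sub]; omega
    have hqc : M * (q - c) ∈ T := ((ih (q - c) (by omega) r hr).1).1 (ht' ▸ ht)
    rw [hsplit, h.2.add_mem_left_iff h0J hqc hj] at hq
    exact hj0 hq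
  · -- `(M - (j - M * q)) + j` is a second splitting of `M * q + M`, which forces `j = M`
    have hlow : M - (j - M * q) ∈ T :=
      h.Iio_subset_left hmin (by simp only [Set.mem_Iio]; omega)
    obtain ⟨-, hjM⟩ := h.2 _ hlow j hj (M * q) hq M hMJ (by omega)
    obtain rfl : q = 0 := by
      by_contra hq0
      have := Nat.le_mul_of_pos_right M (Nat.pos_of_ne_zero hq0)
      omega
    omega

theorem blockSplits_of_forall_lt (ih : ∀ q' < q, BlockSplits T J M q') :
    BlockSplits T J M q := by
  obtain ⟨h0T, h0J⟩ := h.zero_mem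
  obtain ⟨t₀, ht₀, j₀, hj₀, hsum⟩ := h.exists_add_eq (M * q)
  obtain ⟨b, rfl⟩ := dvd_of_mem_of_le_of_forall_lt hM ih hj₀ (by omega)
  obtain ⟨a, rfl⟩ : M ∣ t₀ :=
    (Nat.dvd_add_left (dvd_mul_right M b)).mp (hsum ▸ dvd_mul_right M q)
  have hab : a + b = q := Nat.eq_of_mul_eq_mul_left hM (by rw [mul_add, hsum])
  intro r hr
  rcases Nat.eq_zero_or_pos b with rfl | hb
  · have hq : M * q ∈ T := by rwa [← hsum, mul_zero, add_zero]
    have hqr := add_mem_left_of_forall_lt h hM hMJ hmin ih hq hr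
    refine ⟨iff_of_true hqr hq, fun hJ => ?_⟩
    have := (h.2.add_mem_right_iff h0T hqr h0J).mp (by rwa [add_zero])
    omega
  · have hMb : M * b ≠ 0 := (Nat.mul_pos hM hb).ne'
    have hT : M * a + r ∈ T := ((ih a (by omega) r hr).1).2 ht₀
    have hsplit : M * q + r = (M * a + r) + M * b := by rw [← hab, mul_add]; ring
    refine ⟨iff_of_false ?_ ?_, fun hJ => ?_⟩
    · rw [hsplit, h.2.add_mem_left_iff h0J hT hj₀]; exact hMb
    · rw [← hsum, h.2.add_mem_left_iff h0J ht₀ hj₀]; exact hMb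
    · rw [hsplit, h.2.add_mem_right_iff h0T hT hj₀] at hJ; omega

theorem blockSplits (q : ℕ) : BlockSplits T J M q := by
  induction q using Nat.strong_induction_on with
  | _ q ih => exact blockSplits_of_forall_lt h hM hMJ hmin ih

theorem dvd_of_mem_right {j : ℕ} (hj : j ∈ J) : M ∣ j :=
  (blockSplits h hM hMJ hmin _).dvd_of_mem hM hj

theorem right_eq_image_mul : J = (M * ·) '' ((M * ·) ⁻¹' J) := by
  ext j
  refine ⟨fun hj => ?_, fun ⟨b, hb, hbj⟩ => hbj ▸ hb⟩
  obtain ⟨b, rfl⟩ := dvd_of_mem_right h hM hMJ hmin hj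
  exact ⟨b, hj, rfl⟩

theorem left_eq_Iio_add_image_mul : T = Set.Iio M + (M * ·) '' ((M * ·) ⁻¹' T) := by
  ext n
  constructor
  · intro hn
    have hq := ((blockSplits h hM hMJ hmin (n / M)) (n % M) (Nat.mod_lt _ hM)).1
    rw [Nat.div_add_mod] at hq
    exact ⟨n % M, Nat.mod_lt _ hM, M * (n / M), ⟨n / M, hq.mp hn, rfl⟩, Nat.mod_add_div n M⟩
  · rintro ⟨r, hr, _, ⟨a, ha, rfl⟩, rfl⟩
    show r + M * a ∈ T
    rw [add_comm]
    exact ((blockSplits h hM hMJ hmin a) r hr).1.2 ha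

theorem isDirectSum_preimage_mul :
    IsDirectSum ((M * ·) ⁻¹' T) ((M * ·) ⁻¹' J) Set.univ := by
  refine ⟨(Set.eq_univ_of_forall fun n => ?_).symm,
    h.2.preimage (mul_right_injective₀ hM.ne') (mul_add M)⟩
  obtain ⟨t, ht, j, hj, hsum⟩ := h.exists_add_eq (M * n)
  obtain ⟨b, rfl⟩ := dvd_of_mem_right h hM hMJ hmin hj
  obtain ⟨a, rfl⟩ : M ∣ t :=
    (Nat.dvd_add_left (dvd_mul_right M b)).mp (hsum ▸ dvd_mul_right M n)
  exact ⟨a, ht, b, hj, Nat.eq_of_mul_eq_mul_left hM (by rw [mul_add, hsum])⟩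

end Block

theorem image_mul_left_add (N : ℕ) (X Y : Set ℕ) :
    (N * ·) '' (X + Y) = (N * ·) '' X + (N * ·) '' Y :=
  Set.image_add (AddMonoidHom.mulLeft N)

theorem image_mul_left_image_mul_left (N M : ℕ) (X : Set ℕ) :
    (N * ·) '' ((M * ·) '' X) = (N * M * ·) '' X := by
  simp only [Set.image_image, mul_assoc]

theorem Iio_add_image_mul_left_Iio {N : ℕ} (hN : 0 < N) (M : ℕ) :
    Set.Iio N + (N * ·) '' Set.Iio M = Set.Iio (N * M) := by
  ext n
  simp only [Set.mem_add, Set.mem_image, Set.mem_Iio]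
  constructor
  · rintro ⟨r, hr, _, ⟨a, ha, rfl⟩, rfl⟩
    have := Nat.mul_le_mul_left N (Nat.succ_le_of_lt ha)
    rw [Nat.mul_succ] at this
    omega
  · intro hn
    exact ⟨n % N, Nat.mod_lt _ hN, N * (n / N), ⟨n / N, Nat.div_lt_of_lt_mul hn, rfl⟩,
      Nat.mod_add_div n N⟩

theorem uniqueSumsOn_image_mul_left {C : Set ℕ} {N : ℕ} (hC : C ⊆ Set.Iio N) (A : Set ℕ) :
    UniqueSumsOn C ((N * ·) '' A) := by
  rintro c hc _ ⟨a, -, rfl⟩ c' hc' _ ⟨a', -, rfl⟩ hsum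
  have hcc : c = c' := by
    have hmod := congrArg (· % N) hsum
    simp only [Nat.add_mul_mod_self_left] at hmod
    rwa [Nat.mod_eq_of_lt (hC hc), Nat.mod_eq_of_lt (hC hc')] at hmod
  exact ⟨hcc, by simp only at hsum ⊢; omega⟩

structure IntervalSplitting (T J : Set ℕ) where
  C : Set ℕ
  D : Set ℕ
  N : ℕ
  A : Set ℕ
  B : Set ℕ
  N_pos : 0 < N
  add_eq_Iio : C + D = Set.Iio N
  left_eq : T = C + (N * ·) '' A
  right_eq : J = D + (N * ·) '' B
  isDirectSum : IsDirectSum A B Set.univ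
  infinite_left : A.Infinite
  infinite_right : B.Infinite

namespace IntervalSplitting

variable {T J : Set ℕ}

def swap (s : IntervalSplitting T J) : IntervalSplitting J T :=
  ⟨s.D, s.C, s.N, s.B, s.A, s.N_pos, by rw [add_comm, s.add_eq_Iio], s.right_eq, s.left_eq,
    s.isDirectSum.symm, s.infinite_right, s.infinite_left⟩

def refl (h : IsDirectSum T J Set.univ) (hT : T.Infinite) (hJ : J.Infinite) :
    IntervalSplitting T J :=
  ⟨0, 0, 1, T, J, one_pos, by ext n; simp, by simp, by simp, h, hT, hJ⟩

def trans (s : IntervalSplitting T J) (s' : IntervalSplitting s.A s.B) : IntervalSplitting T J where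
  C := s.C + (s.N * ·) '' s'.C
  D := s.D + (s.N * ·) '' s'.D
  N := s.N * s'.N
  A := s'.A
  B := s'.B
  N_pos := Nat.mul_pos s.N_pos s'.N_pos
  add_eq_Iio := by
    rw [add_add_add_comm, s.add_eq_Iio, ← image_mul_left_add, s'.add_eq_Iio,
      Iio_add_image_mul_left_Iio s.N_pos]
  left_eq := by
    rw [add_assoc, ← image_mul_left_image_mul_left, ← image_mul_left_add, ← s'.left_eq]
    exact s.left_eq
  right_eq := by
    rw [add_assoc, ← image_mul_left_image_mul_left, ← image_mul_left_add, ← s'.right_eq]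
    exact s.right_eq
  isDirectSum := s'.isDirectSum
  infinite_left := s'.infinite_left
  infinite_right := s'.infinite_right

variable (s : IntervalSplitting T J)

theorem zero_mem : 0 ∈ s.C ∧ 0 ∈ s.D :=
  zero_mem_of_zero_mem_add (s.add_eq_Iio ▸ s.N_pos)

theorem left_subset_Iio : s.C ⊆ Set.Iio s.N :=
  (Set.subset_add_left _ s.zero_mem.2).trans s.add_eq_Iio.subset

theorem left_subset : s.C ⊆ T :=
  (Set.subset_add_left s.C (t := (s.N * ·) '' s.A)
    ⟨0, s.isDirectSum.zero_mem.1, mul_zero s.N⟩).trans s.left_eq.symm.subset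

theorem mem_left_of_lt {t : ℕ} (ht : t ∈ T) (htN : t < s.N) : t ∈ s.C := by
  rw [s.left_eq] at ht
  obtain ⟨c, hc, _, ⟨a, -, rfl⟩, rfl⟩ := ht
  dsimp only at htN ⊢
  obtain rfl : a = 0 := by
    by_contra ha
    have := Nat.le_mul_of_pos_right s.N (Nat.pos_of_ne_zero ha)
    omega
  simpa using hc

theorem isDirectSum_left : IsDirectSum s.C ((s.N * ·) '' s.A) T :=
  ⟨s.left_eq, uniqueSumsOn_image_mul_left s.left_subset_Iio s.A⟩

theorem isDirectSum_Iio (h : IsDirectSum T J Set.univ) : IsDirectSum s.C s.D (Set.Iio s.N) :=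
  ⟨s.add_eq_Iio.symm, h.2.mono s.left_subset s.swap.left_subset⟩

theorem left_subset_trans (s' : IntervalSplitting s.A s.B) : s.C ⊆ (s.trans s').C :=
  Set.subset_add_left _ ⟨0, s'.zero_mem.1, mul_zero _⟩

theorem right_subset_trans (s' : IntervalSplitting s.A s.B) : s.D ⊆ (s.trans s').D :=
  s.swap.left_subset_trans s'.swap

theorem exists_two_le_N_of_one_mem (h : IsDirectSum T J Set.univ) (h1 : 1 ∈ T)
    (hT : T.Infinite) (hJ : J.Infinite) : ∃ s : IntervalSplitting T J, 2 ≤ s.N := by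
  have hne : {j | j ∈ J ∧ j ≠ 0}.Nonempty := by
    obtain ⟨j, hj, hj0⟩ := (hJ.sdiff (Set.finite_singleton 0)).nonempty
    exact ⟨j, hj, hj0⟩
  set M := sInf {j | j ∈ J ∧ j ≠ 0}
  obtain ⟨hMJ, hM0⟩ : M ∈ J ∧ M ≠ 0 := Nat.sInf_mem hne
  have hmin : ∀ j ∈ J, j < M → j = 0 := fun j hj hjM => by
    by_contra hj0
    exact (Nat.sInf_le (show j ∈ {j | j ∈ J ∧ j ≠ 0} from ⟨hj, hj0⟩)).not_gt hjM
  have hM : 0 < M := Nat.pos_of_ne_zero hM0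
  have hM1 : M ≠ 1 := by
    rintro hM1
    have := h.2.add_mem_left_iff h.zero_mem.2 h.zero_mem.1 (hM1 ▸ hMJ)
    simp_all
  have hTeq := left_eq_Iio_add_image_mul h hM hMJ hmin
  have hJeq := right_eq_image_mul h hM hMJ hmin
  refine ⟨⟨Set.Iio M, 0, M, (M * ·) ⁻¹' T, (M * ·) ⁻¹' J, hM, add_zero _, hTeq,
    hJeq.trans (zero_add _).symm, isDirectSum_preimage_mul h hM hMJ hmin, ?_, ?_⟩,
    show 2 ≤ M by omega⟩
  · exact fun hfin => hT (hTeq ▸ (Set.finite_Iio M).add (hfin.image _))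
  · exact Set.Infinite.of_image _ (hJeq ▸ hJ)

theorem exists_two_le_N (h : IsDirectSum T J Set.univ) (hT : T.Infinite) (hJ : J.Infinite) :
    ∃ s : IntervalSplitting T J, 2 ≤ s.N := by
  obtain ⟨t, ht, j, hj, hsum⟩ := h.exists_add_eq 1
  rcases (by omega : t = 1 ∨ j = 1) with rfl | rfl
  · exact exists_two_le_N_of_one_mem h ht hT hJ
  · obtain ⟨s, hs⟩ := exists_two_le_N_of_one_mem h.symm hj hJ hT
    exact ⟨s.swap, hs⟩

theorem exists_seq (h : IsDirectSum T J Set.univ) (hT : T.Infinite) (hJ : J.Infinite) :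
    ∃ s : ℕ → IntervalSplitting T J, (∀ k, (s k).C ⊆ (s (k + 1)).C) ∧
      (∀ k, (s k).D ⊆ (s (k + 1)).D) ∧ StrictMono fun k => (s k).N := by
  choose next hnext using fun s : IntervalSplitting T J =>
    exists_two_le_N s.isDirectSum s.infinite_left s.infinite_right
  let seq : ℕ → IntervalSplitting T J :=
    fun k => Nat.rec (refl h hT hJ) (fun _ s => s.trans (next s)) k
  refine ⟨seq, fun k => (seq k).left_subset_trans _, fun k => (seq k).right_subset_trans _,
    strictMono_nat_of_lt_succ fun k => ?_⟩
  exact lt_mul_of_one_lt_right (seq k).N_pos (hnext (seq k))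

theorem iUnion_left_eq (s : ℕ → IntervalSplitting T J) (hs : StrictMono fun k => (s k).N) :
    ⋃ k, (s k).C = T := by
  refine subset_antisymm (Set.iUnion_subset fun k => (s k).left_subset) fun t ht => ?_
  exact Set.mem_iUnion.mpr ⟨t + 1, (s (t + 1)).mem_left_of_lt ht (hs.id_le (t + 1))⟩

end IntervalSplitting

theorem stmt13 (T J : Set ℕ) (h : IsDirectSum T J Set.univ)
    (hT : T.Infinite) (hJ : J.Infinite) :
    ∃ (C D : ℕ → Set ℕ) (N : ℕ → ℕ) (A B : ℕ → Set ℕ),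
      (∀ k, IsDirectSum (C k) (D k) (Set.Iio (N k))) ∧
      (∀ k, C k ⊆ C (k + 1)) ∧ (∀ k, D k ⊆ D (k + 1)) ∧
      (⋃ k, C k) = T ∧ (⋃ k, D k) = J ∧
      (∀ k, IsDirectSum (C k) ((N k * ·) '' A k) T) ∧
      (∀ k, IsDirectSum (D k) ((N k * ·) '' B k) J) := by
  obtain ⟨s, hC, hD, hN⟩ := IntervalSplitting.exists_seq h hT hJ
  exact ⟨fun k => (s k).C, fun k => (s k).D, fun k => (s k).N, fun k => (s k).A,
    fun k => (s k).B, fun k => (s k).isDirectSum_Iio h, hC, hD,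
    IntervalSplitting.iUnion_left_eq s hN,
    IntervalSplitting.iUnion_left_eq (fun k => (s k).swap) hN, fun k => (s k).isDirectSum_left,
    fun k => (s k).swap.isDirectSum_left⟩
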